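/- Let Size be the W-type of a signature (Op, Ar) with the plump order: < and ≤ are the least relations satisfying (∀ x : Ar a, b x < i) → σ a b ≤ i and (∃ x : Ar a, i ≤ b x) → i < σ a b. Then < is transitive and well-founded, ≤ is reflexive, and consequently for every a : Op and b : Ar a → Size one has ∀ x : Ar a, b x < σ a b (every Ar a-indexed family of sizes has σ a b as a strict upper bound). -/
import Mathlib


universe u

/-- The W-type for the signature `(Op, Ar)`. -/
inductive SizeW (Op : Type u) (Ar : Op → Type u) : Type u
  | σ : (a : Op) → (Ar a → SizeW Op Ar) → SizeW Op Ar

mutual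
  /-- Taylor's plump strict order: `i < σ a b` as soon as `i ≤ b x` for some
  `x : Ar a`. (`PlumpLt`/`PlumpLe` are the least relations closed under the two
  displayed rules, as inductively defined predicates.) -/
  inductive PlumpLt {Op : Type u} {Ar : Op → Type u} :
      SizeW Op Ar → SizeW Op Ar → Prop
    | intro {i : SizeW Op Ar} {a : Op} {b : Ar a → SizeW Op Ar} (x : Ar a) :
        PlumpLe i (b x) → PlumpLt i (SizeW.σ a b)
  /-- Plump order: `σ a b ≤ i` as soon as `b x < i` for all `x : Ar a`. -/
  inductive PlumpLe {Op : Type u} {Ar : Op → Type u} :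
      SizeW Op Ar → SizeW Op Ar → Prop
    | intro {a : Op} {b : Ar a → SizeW Op Ar} {i : SizeW Op Ar} :
        (∀ x : Ar a, PlumpLt (b x) i) → PlumpLe (SizeW.σ a b) i
end

namespace PlumpAux

variable {Op : Type u} {Ar : Op → Type u}

theorem trans3 (k : SizeW Op Ar) :
    (∀ i j, PlumpLe i j → PlumpLt j k → PlumpLt i k) ∧
    (∀ i j, PlumpLt i j → PlumpLe j k → PlumpLt i k) ∧
    (∀ i j, PlumpLe i j → PlumpLe j k → PlumpLe i k) := by
  induction k with
  | σ a b ih =>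
    have A : ∀ i j, PlumpLe i j → PlumpLt j (SizeW.σ a b) → PlumpLt i (SizeW.σ a b) := by
      intro i j hij hjk
      cases hjk with
      | intro x hjx => exact PlumpLt.intro x ((ih x).2.2 i j hij hjx)
    have B : ∀ i j, PlumpLt i j → PlumpLe j (SizeW.σ a b) → PlumpLt i (SizeW.σ a b) := by
      intro i j hij hjk
      cases hij with
      | intro y hiy =>
        cases hjk with
        | intro h => exact A i _ hiy (h y)
    have C : ∀ i j, PlumpLe i j → PlumpLe j (SizeW.σ a b) → PlumpLe i (SizeW.σ a b) := by
      intro i j hij hjk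
      cases hij with
      | intro h => exact PlumpLe.intro fun x => B _ j (h x) hjk
    exact ⟨A, B, C⟩

theorem le_of_lt (j : SizeW Op Ar) : ∀ i, PlumpLt i j → PlumpLe i j := by
  induction j with
  | σ a b ih =>
    intro i h
    cases h with
    | intro x hx =>
      cases hx with
      | intro hd =>
        exact PlumpLe.intro fun y => PlumpLt.intro x (ih x _ (hd y))

theorem lt_trans {i j k : SizeW Op Ar} (h1 : PlumpLt i j) (h2 : PlumpLt j k) :
    PlumpLt i k := by
  cases h2 with
  | intro x hx =>
    exact PlumpLt.intro x (le_of_lt _ _ ((trans3 _).2.1 i j h1 hx))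

theorem le_refl (i : SizeW Op Ar) : PlumpLe i i := by
  induction i with
  | σ a b ih => exact PlumpLe.intro fun x => PlumpLt.intro x (ih x)

theorem acc_of_le {j k : SizeW Op Ar} (hk : Acc PlumpLt k) (h : PlumpLe j k) :
    Acc PlumpLt j :=
  Acc.intro j fun m hm => hk.inv ((trans3 k).2.1 m j hm h)

theorem acc_all (i : SizeW Op Ar) : Acc PlumpLt i := by
  induction i with
  | σ a b ih =>
    refine Acc.intro _ fun j hj => ?_
    cases hj with
    | intro x hx => exact acc_of_le (ih x) hx

end PlumpAux

/-- the plump order `<` on the W-type of `(Op, Ar)` is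
transitive and well-founded, `≤` is reflexive, and consequently every
`Ar a`-indexed family `b` of sizes has `σ a b` as a strict upper bound. -/
theorem plump_order_properties (Op : Type u) (Ar : Op → Type u) :
    (∀ i j k : SizeW Op Ar, PlumpLt i j → PlumpLt j k → PlumpLt i k) ∧
    (∀ φ : SizeW Op Ar → Prop,
      (∀ i, (∀ j, PlumpLt j i → φ j) → φ i) → ∀ i, φ i) ∧
    (∀ i : SizeW Op Ar, PlumpLe i i) ∧
    (∀ (a : Op) (b : Ar a → SizeW Op Ar) (x : Ar a),
      PlumpLt (b x) (SizeW.σ a b)) := by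
  refine ⟨fun i j k => PlumpAux.lt_trans, ?_, PlumpAux.le_refl, ?_⟩
  · intro φ h i
    exact (WellFounded.intro PlumpAux.acc_all).induction i h
  · intro a b x
    exact PlumpLt.intro x (PlumpAux.le_refl (b x))
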